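/- arXiv:1602.04208 — 4 statements merged into one kernel-verified Lean document; each statement's English description precedes it below -/
import Mathlib

section
/- Let H be a real inner product space, let z_1,...,z_i be vectors in H, let P_{i-1} be the orthogonal projection onto span{z_1,...,z_{i-1}} and P_i the orthogonal projection onto span{z_1,...,z_i}. For y ∈ H define residuals r_i = y - P_{i-1} y and r_{i+1} = y - P_i y, and set q_i := r_i - r_{i+1}. If z_i ∉ span{z_1,...,z_{i-1}} and z_i ≠ 0, then ‖q_i‖² ≥ ⟨z_i, r_i⟩² / ‖z_i‖². -/
/-!
The new residual `r_{i+1}` is orthogonal to `z_i`, so `⟪z_i, r_i⟫ = ⟪z_i, q_i⟫`, and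
Cauchy–Schwarz bounds this by `‖z_i‖ ‖q_i‖`.
-/

open RealInnerProductSpace

section

variable {H : Type*} [NormedAddCommGroup H] [InnerProductSpace ℝ H]

theorem real_inner_sq_div_norm_sq_le (z v : H) : ⟪z, v⟫ ^ 2 / ‖z‖ ^ 2 ≤ ‖v‖ ^ 2 := by
  refine div_le_of_le_mul₀ (by positivity) (by positivity) ?_
  calc ⟪z, v⟫ ^ 2 = |⟪z, v⟫| ^ 2 := (sq_abs _).symm
    _ ≤ (‖z‖ * ‖v‖) ^ 2 := by gcongr; exact abs_real_inner_le_norm z v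
    _ = ‖v‖ ^ 2 * ‖z‖ ^ 2 := by ring

theorem real_inner_sq_div_norm_sq_le_norm_sub_sq {z r r' : H} (h : ⟪r', z⟫ = 0) :
    ⟪z, r⟫ ^ 2 / ‖z‖ ^ 2 ≤ ‖r - r'‖ ^ 2 := by
  have hinner : ⟪z, r⟫ = ⟪z, r - r'⟫ := by
    rw [inner_sub_right, real_inner_comm r', h, sub_zero]
  rw [hinner]
  exact real_inner_sq_div_norm_sq_le z (r - r')

end

theorem stmt_2_general {H : Type*} [NormedAddCommGroup H] [InnerProductSpace ℝ H]
    (n : ℕ) (z : Fin (n + 1) → H) (y p p' : H)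
    (Vfull : Submodule ℝ H)
    (hVfull : Vfull = Submodule.span ℝ (Set.range z))
    (hp'orth : ∀ w ∈ Vfull, ⟪y - p', w⟫ = 0) :
    ⟪z (Fin.last n), y - p⟫ ^ 2 / ‖z (Fin.last n)‖ ^ 2 ≤ ‖(y - p) - (y - p')‖ ^ 2 := by
  subst hVfull
  exact real_inner_sq_div_norm_sq_le_norm_sub_sq (hp'orth _ (Submodule.subset_span ⟨_, rfl⟩))

/-- One-step residual decrease bound: with `p`, `p'` the orthogonal
projections of `y` onto the spans of `z_1,…,z_{i-1}` resp. `z_1,…,z_i`, and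
`q = r_i - r_{i+1}` the change of residual, if the new atom is not in the old span
(and nonzero) then `‖q‖² ≥ ⟪z_i, r_i⟫² / ‖z_i‖²`. -/
theorem stmt_2 {H : Type*} [NormedAddCommGroup H] [InnerProductSpace ℝ H]
    (n : ℕ) (z : Fin (n + 1) → H) (y p p' : H)
    (Vprev : Submodule ℝ H)
    (hVprev : Vprev = Submodule.span ℝ (Set.range fun j : Fin n => z j.castSucc))
    (Vfull : Submodule ℝ H)
    (hVfull : Vfull = Submodule.span ℝ (Set.range z))
    (hp : p ∈ Vprev) (hporth : ∀ w ∈ Vprev, ⟪y - p, w⟫ = 0)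
    (hp' : p' ∈ Vfull) (hp'orth : ∀ w ∈ Vfull, ⟪y - p', w⟫ = 0)
    (hznotin : z (Fin.last n) ∉ Vprev) (hz0 : z (Fin.last n) ≠ 0) :
    ⟪z (Fin.last n), y - p⟫ ^ 2 / ‖z (Fin.last n)‖ ^ 2 ≤ ‖(y - p) - (y - p')‖ ^ 2 :=
  stmt_2_general n z y p p' Vfull hVfull hp'orth
end

section
/- Let s_1,...,s_n be unit-norm vectors in a real inner product space with cumulative coherence μ(m-1) := max over index sets I of size m-1 and k ∉ I of Σ_{i∈I} |⟨s_k, s_i⟩|. If μ(m-1) < 1 for some m ≤ n, then for every index set J ⊆ [n] with |J| = m, the smallest eigenvalue of the Gram matrix G(J), defined by G(J)_{ij} = ⟨s_i, s_j⟩ for i,j ∈ J, satisfies λ_min(G(J)) ≥ 1 - μ(m-1). -/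
open RealInnerProductSpace

/-! Gershgorin's circle theorem places every eigenvalue of `G(J)` within distance
`∑_{j ∈ J, j ≠ k} |⟨s_k, s_j⟩|` of some diagonal entry `⟨s_k, s_k⟩ = 1`, and that row sum is a
sum over the `m - 1` atoms of `J \ {k}`, hence at most `μ(m-1)`. -/

namespace Matrix.IsHermitian

variable {𝕜 n : Type*} [RCLike 𝕜] [Fintype n] [DecidableEq n] {A : Matrix n n 𝕜}

theorem hasEigenvalue_toLin'_eigenvalues (hA : A.IsHermitian) (i : n) :
    Module.End.HasEigenvalue (Matrix.toLin' A) (hA.eigenvalues i : 𝕜) :=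
  .of_mem_spectrum <| by
    rw [Matrix.spectrum_toLin']
    exact spectrum.algebraMap_mem 𝕜 (hA.eigenvalues_mem_spectrum_real i)

theorem exists_re_diag_sub_sum_le_eigenvalues (hA : A.IsHermitian) (i : n) :
    ∃ k, RCLike.re (A k k) - ∑ j ∈ Finset.univ.erase k, ‖A k j‖ ≤ hA.eigenvalues i := by
  obtain ⟨k, hk⟩ := eigenvalue_mem_ball (hA.hasEigenvalue_toLin'_eigenvalues i)
  rw [Metric.mem_closedBall, dist_comm, dist_eq_norm] at hk
  refine ⟨k, ?_⟩
  have hre : RCLike.re (A k k - hA.eigenvalues i) ≤ ‖A k k - hA.eigenvalues i‖ :=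
    RCLike.re_le_norm _
  rw [map_sub, RCLike.ofReal_re] at hre
  linarith

end Matrix.IsHermitian

theorem Finset.sum_univ_erase_coe {ι M : Type*} [DecidableEq ι] [AddCommGroup M]
    {J : Finset ι} (k : J) (f : ι → M) :
    ∑ j ∈ (Finset.univ : Finset J).erase k, f j = ∑ x ∈ J.erase k, f x := by
  rw [Finset.sum_erase_eq_sub (Finset.mem_univ k), Finset.sum_erase_eq_sub k.2,
    Finset.sum_coe_sort J f]

theorem stmt_5_general {E : Type*} [NormedAddCommGroup E] [InnerProductSpace ℝ E]
    (n m : ℕ)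
    (s : Fin n → E) (hnorm : ∀ i, ‖s i‖ = 1)
    (μ : ℝ)
    (hμ : ∀ (I : Finset (Fin n)) (k : Fin n), I.card = m - 1 → k ∉ I →
      ∑ i ∈ I, |⟪s k, s i⟫| ≤ μ)
    (J : Finset (Fin n)) (hJ : J.card = m)
    (G : Matrix J J ℝ) (hGdef : ∀ i j : J, G i j = ⟪s i, s j⟫)
    (hG : G.IsHermitian) :
    ∀ i : J, 1 - μ ≤ hG.eigenvalues i := by
  intro i
  obtain ⟨k, hk⟩ := hG.exists_re_diag_sub_sum_le_eigenvalues i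
  have hdiag : G k k = 1 := by
    rw [hGdef, real_inner_self_eq_norm_sq, hnorm, one_pow]
  have hrow : ∑ j ∈ Finset.univ.erase k, ‖G k j‖ ≤ μ := by
    simp only [hGdef, Real.norm_eq_abs]
    rw [Finset.sum_univ_erase_coe k (fun x => |⟪s k, s x⟫|)]
    exact hμ _ _ (by rw [Finset.card_erase_of_mem k.2, hJ]) (Finset.notMem_erase _ _)
  rw [hdiag, RCLike.re_to_real] at hk
  linarith

/-- If the cumulative coherence satisfies `μ(m-1) < 1`, then for any
index set `J` of size `m` the Gram matrix `G(J)` of the unit-norm atoms has all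
eigenvalues at least `1 - μ(m-1)`. -/
theorem stmt_5 {E : Type*} [NormedAddCommGroup E] [InnerProductSpace ℝ E]
    (n m : ℕ) (hm1 : 1 ≤ m) (hm : m ≤ n)
    (s : Fin n → E) (hnorm : ∀ i, ‖s i‖ = 1)
    (μ : ℝ)
    (hμ : ∀ (I : Finset (Fin n)) (k : Fin n), I.card = m - 1 → k ∉ I →
      ∑ i ∈ I, |⟪s k, s i⟫| ≤ μ)
    (hμlt : μ < 1)
    (J : Finset (Fin n)) (hJ : J.card = m)
    (G : Matrix J J ℝ) (hGdef : ∀ i j : J, G i j = ⟪s i, s j⟫)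
    (hG : G.IsHermitian) :
    ∀ i : J, 1 - μ ≤ hG.eigenvalues i :=
  stmt_5_general n m s hnorm μ hμ J hJ G hGdef hG
end

section
/- Let S be a finite symmetric dictionary of unit-norm atoms in a real Hilbert space H with |S| = n, and suppose y ∈ lin(S) can be written using m ≤ n atoms where μ(m-1) < 1. Then the residuals of orthogonal matching pursuit satisfy ‖r_{i+1}‖² ≤ (1 - (1 - μ(m-1))/m) · ‖r_i‖² for all iterations 1 ≤ i ≤ m. -/
/-!
A greedy step removes the component of the residual `r` along the selected atom `s k`, so
`‖r'‖² ≤ ‖r‖² - ⟪s k, r⟫²`. To bound `⟪s k, r⟫²` from below, expand `r = ∑_{i ∈ T} lᵢ sᵢ` over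
the `m` atoms of the support. On one hand `‖r‖² = ∑ lᵢ ⟪sᵢ, r⟫ ≤ (∑ |lᵢ|) |⟪s k, r⟫|` and
`(∑ |lᵢ|)² ≤ m ∑ lᵢ²`; on the other hand the coherence bound makes the Gram matrix of the
support diagonally dominant, so `(1 - μ) ∑ lᵢ² ≤ ‖r‖²`. Together, `(1 - μ) ‖r‖² ≤ m ⟪s k, r⟫²`.
-/

open RealInnerProductSpace

section

open Finset

variable {ι E : Type*} [NormedAddCommGroup E] [InnerProductSpace ℝ E]

theorem norm_sub_sq_le_of_forall_inner_eq_zero {K : Submodule ℝ E} {y z v : E} (hz : z ∈ K)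
    (horth : ∀ w ∈ K, ⟪y - z, w⟫ = 0) (hv : v ∈ K) : ‖y - z‖ ^ 2 ≤ ‖y - v‖ ^ 2 := by
  have hpyth : ‖y - v‖ ^ 2 = ‖y - z‖ ^ 2 + ‖z - v‖ ^ 2 := by
    rw [← sub_add_sub_cancel y z v, norm_add_sq_real, horth _ (K.sub_mem hz hv)]
    ring
  nlinarith [sq_nonneg ‖z - v‖]

theorem norm_sub_inner_smul_sq {u : E} (hu : ‖u‖ = 1) (r : E) :
    ‖r - ⟪u, r⟫ • u‖ ^ 2 = ‖r‖ ^ 2 - ⟪u, r⟫ ^ 2 := by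
  rw [norm_sub_sq_real, real_inner_smul_right, norm_smul, real_inner_comm, Real.norm_eq_abs, hu]
  ring_nf
  rw [sq_abs]
  ring

theorem exists_sum_smul_eq_of_mem_span_image {s : ι → E} {T : Finset ι} {r : E}
    (hr : r ∈ Submodule.span ℝ (s '' T)) : ∃ l : ι → ℝ, ∑ i ∈ T, l i • s i = r := by
  obtain ⟨l, hl, rfl⟩ := (Finsupp.mem_span_image_iff_linearCombination ℝ).1 hr
  exact ⟨l, (Finsupp.linearCombination_apply_of_mem_supported ℝ hl).symm⟩

theorem Finset.sum_sum_erase_comm {M : Type*} [AddCommMonoid M] [DecidableEq ι] (T : Finset ι)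
    (f : ι → ι → M) : ∑ i ∈ T, ∑ j ∈ T.erase i, f i j = ∑ i ∈ T, ∑ j ∈ T.erase i, f j i :=
  Finset.sum_comm' fun i j => by simp only [mem_erase]; tauto

theorem norm_sum_smul_sq_eq {s : ι → E} (T : Finset ι) (l : ι → ℝ) :
    ‖∑ i ∈ T, l i • s i‖ ^ 2 = ∑ i ∈ T, ∑ j ∈ T, l i * l j * ⟪s i, s j⟫ := by
  rw [← real_inner_self_eq_norm_sq, sum_inner]
  refine sum_congr rfl fun i _ => ?_
  rw [inner_sum]
  refine sum_congr rfl fun j _ => ?_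
  rw [real_inner_smul_left, real_inner_smul_right]
  ring

theorem one_sub_mul_sum_sq_le_norm_sum_smul_sq [DecidableEq ι] {s : ι → E} {T : Finset ι}
    {μ : ℝ} (hnorm : ∀ i ∈ T, ‖s i‖ = 1)
    (hμ : ∀ i ∈ T, ∑ j ∈ T.erase i, |⟪s i, s j⟫| ≤ μ) (l : ι → ℝ) :
    (1 - μ) * ∑ i ∈ T, l i ^ 2 ≤ ‖∑ i ∈ T, l i • s i‖ ^ 2 := by
  set B := ∑ i ∈ T, ∑ j ∈ T.erase i, l i ^ 2 * |⟪s i, s j⟫|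
  have hB : B ≤ μ * ∑ i ∈ T, l i ^ 2 := by
    rw [mul_sum]
    refine sum_le_sum fun i hi => ?_
    rw [← mul_sum, mul_comm μ]
    exact mul_le_mul_of_nonneg_left (hμ i hi) (sq_nonneg _)
  have hB_symm : ∑ i ∈ T, ∑ j ∈ T.erase i, l j ^ 2 * |⟪s i, s j⟫| = B := by
    rw [sum_sum_erase_comm]
    simp_rw [real_inner_comm]
    rfl
  -- `2 |ab| ≤ a² + b²` on each off-diagonal entry of the Gram matrix
  have hcross : -B ≤ ∑ i ∈ T, ∑ j ∈ T.erase i, l i * l j * ⟪s i, s j⟫ := by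
    have hterm : ∀ i j, -(l i ^ 2 * |⟪s i, s j⟫| + l j ^ 2 * |⟪s i, s j⟫|) / 2
        ≤ l i * l j * ⟪s i, s j⟫ := fun i j => by
      rcases abs_cases ⟪s i, s j⟫ with ⟨h, _⟩ | ⟨h, _⟩ <;> rw [h] <;>
        nlinarith [mul_nonneg (sq_nonneg (l i + l j)) (abs_nonneg ⟪s i, s j⟫),
          mul_nonneg (sq_nonneg (l i - l j)) (abs_nonneg ⟪s i, s j⟫)]
    calc -B = ∑ i ∈ T, ∑ j ∈ T.erase i,
          -(l i ^ 2 * |⟪s i, s j⟫| + l j ^ 2 * |⟪s i, s j⟫|) / 2 := by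
          simp only [neg_div, sum_neg_distrib, ← sum_div, sum_add_distrib, hB_symm]
          ring
      _ ≤ _ := sum_le_sum fun i _ => sum_le_sum fun j _ => hterm i j
  have hdiag : ‖∑ i ∈ T, l i • s i‖ ^ 2
      = ∑ i ∈ T, l i ^ 2 + ∑ i ∈ T, ∑ j ∈ T.erase i, l i * l j * ⟪s i, s j⟫ := by
    rw [norm_sum_smul_sq_eq, ← sum_add_distrib]
    refine sum_congr rfl fun i hi => ?_
    rw [← add_sum_erase _ _ hi, real_inner_self_eq_norm_sq, hnorm i hi]
    ring
  linarith

theorem norm_sum_smul_sq_le_sum_abs_mul {s : ι → E} {T : Finset ι} (l : ι → ℝ) {c : ℝ}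
    (hc : ∀ i ∈ T, |⟪s i, ∑ j ∈ T, l j • s j⟫| ≤ c) :
    ‖∑ i ∈ T, l i • s i‖ ^ 2 ≤ (∑ i ∈ T, |l i|) * c := by
  rw [← real_inner_self_eq_norm_sq, sum_inner, sum_mul]
  refine sum_le_sum fun i hi => ?_
  rw [real_inner_smul_left]
  calc l i * ⟪s i, _⟫ ≤ |l i| * |⟪s i, _⟫| := (le_abs_self _).trans (abs_mul _ _).le
    _ ≤ |l i| * c := mul_le_mul_of_nonneg_left (hc i hi) (abs_nonneg _)

theorem one_sub_mul_norm_sq_le_card_mul_inner_sq [DecidableEq ι] {s : ι → E} {T : Finset ι}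
    {μ : ℝ} (hnorm : ∀ i ∈ T, ‖s i‖ = 1)
    (hμ : ∀ i ∈ T, ∑ j ∈ T.erase i, |⟪s i, s j⟫| ≤ μ) {r : E}
    (hr : r ∈ Submodule.span ℝ (s '' T)) {k : ι} (hmax : ∀ i ∈ T, |⟪s i, r⟫| ≤ |⟪s k, r⟫|) :
    (1 - μ) * ‖r‖ ^ 2 ≤ #T * ⟪s k, r⟫ ^ 2 := by
  obtain ⟨l, rfl⟩ := exists_sum_smul_eq_of_mem_span_image hr
  have hgram := one_sub_mul_sum_sq_le_norm_sum_smul_sq hnorm hμ l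
  have hcorr := norm_sum_smul_sq_le_sum_abs_mul l hmax
  have hcs : (∑ i ∈ T, |l i|) ^ 2 ≤ #T * ∑ i ∈ T, l i ^ 2 := by
    simpa only [sq_abs] using sq_sum_le_card_mul_sum_sq (s := T) (f := fun i => |l i|)
  set N := ‖∑ i ∈ T, l i • s i‖ ^ 2
  set t := ⟪s k, ∑ i ∈ T, l i • s i⟫
  have hN : 0 ≤ N := sq_nonneg _
  have hN2 : N ^ 2 ≤ #T * (∑ i ∈ T, l i ^ 2) * t ^ 2 :=
    calc N ^ 2 ≤ ((∑ i ∈ T, |l i|) * |t|) ^ 2 := pow_le_pow_left₀ hN hcorr 2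
      _ = (∑ i ∈ T, |l i|) ^ 2 * t ^ 2 := by rw [mul_pow, sq_abs]
      _ ≤ _ := mul_le_mul_of_nonneg_right hcs (sq_nonneg _)
  have hrhs : 0 ≤ (#T : ℝ) * t ^ 2 := by positivity
  rcases le_or_gt (1 - μ) 0 with hμ1 | hμ1
  · nlinarith
  rcases hN.eq_or_lt with hN0 | hNpos
  · rwa [← hN0, mul_zero]
  refine le_of_mul_le_mul_right ?_ hNpos
  nlinarith [mul_le_mul_of_nonneg_left hgram (mul_nonneg hrhs hμ1.le)]

end

theorem stmt_10_general {H : Type*} [NormedAddCommGroup H] [InnerProductSpace ℝ H]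
    (n m : ℕ)
    (s : Fin n → H) (hnorm : ∀ i, ‖s i‖ = 1)
    (μ : ℝ)
    (hμ : ∀ (I : Finset (Fin n)) (k : Fin n), I.card = m - 1 → k ∉ I →
      ∑ i ∈ I, |⟪s k, s i⟫| ≤ μ)
    (y : H) (T : Finset (Fin n)) (hT : T.card = m)
    (hyT : y ∈ Submodule.span ℝ (s '' ↑T))
    (prev : Finset (Fin n)) (hprevT : prev ⊆ T)
    (xi : H) (hxi : xi ∈ Submodule.span ℝ (s '' ↑prev))
    (k : Fin n) (hmax : ∀ j, |⟪s j, y - xi⟫| ≤ |⟪s k, y - xi⟫|)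
    (xi' : H) (hxi' : xi' ∈ Submodule.span ℝ (insert (s k) (s '' ↑prev)))
    (hxi'orth : ∀ w ∈ Submodule.span ℝ (insert (s k) (s '' ↑prev)), ⟪y - xi', w⟫ = 0) :
    ‖y - xi'‖ ^ 2 ≤ (1 - (1 - μ) / (m : ℝ)) * ‖y - xi‖ ^ 2 := by
  set t := ⟪s k, y - xi⟫
  have hr : y - xi ∈ Submodule.span ℝ (s '' T) :=
    sub_mem hyT (Submodule.span_mono (Set.image_mono hprevT) hxi)
  have hgreedy : (1 - μ) * ‖y - xi‖ ^ 2 ≤ m * t ^ 2 := by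
    rw [← hT]
    exact one_sub_mul_norm_sq_le_card_mul_inner_sq (fun i _ => hnorm i)
      (fun i hi => hμ _ i (by rw [Finset.card_erase_of_mem hi, hT]) (Finset.notMem_erase i T))
      hr (fun i _ => hmax i)
  have hproj : ‖y - xi'‖ ^ 2 ≤ ‖y - xi‖ ^ 2 - t ^ 2 := by
    rw [← norm_sub_inner_smul_sq (hnorm k), sub_sub]
    refine norm_sub_sq_le_of_forall_inner_eq_zero hxi' hxi'orth (add_mem ?_ ?_)
    · exact Submodule.span_mono (Set.subset_insert _ _) hxi
    · exact Submodule.smul_mem _ _ (Submodule.subset_span (Set.mem_insert _ _))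
  have hdiv : (1 - μ) / m * ‖y - xi‖ ^ 2 ≤ t ^ 2 := by
    rw [div_mul_eq_mul_div]
    exact div_le_of_le_mul₀ m.cast_nonneg (sq_nonneg t) (hgreedy.trans_eq (mul_comm _ _))
  linarith

/-- Coherence-based linear convergence of OMP when `y ∈ lin(S)` is
supported on `m ≤ n` atoms and `μ(m-1) < 1`: each residual of orthogonal matching
pursuit (whose selected atoms stay in the support) contracts as
`‖r_{i+1}‖² ≤ (1 - (1 - μ(m-1))/m) ‖r_i‖²`. -/
theorem stmt_10 {H : Type*} [NormedAddCommGroup H] [InnerProductSpace ℝ H] [CompleteSpace H]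
    (n m : ℕ) (hm1 : 1 ≤ m) (hm : m ≤ n)
    (s : Fin n → H) (hnorm : ∀ i, ‖s i‖ = 1)
    (hsym : ∀ i, ∃ j, s j = -s i)
    (μ : ℝ)
    (hμ : ∀ (I : Finset (Fin n)) (k : Fin n), I.card = m - 1 → k ∉ I →
      ∑ i ∈ I, |⟪s k, s i⟫| ≤ μ)
    (hμlt : μ < 1)
    (y : H) (T : Finset (Fin n)) (hT : T.card = m)
    (hyT : y ∈ Submodule.span ℝ (s '' ↑T))
    (prev : Finset (Fin n)) (hprevT : prev ⊆ T)
    (xi : H) (hxi : xi ∈ Submodule.span ℝ (s '' ↑prev))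
    (hxiorth : ∀ w ∈ Submodule.span ℝ (s '' ↑prev), ⟪y - xi, w⟫ = 0)
    (k : Fin n) (hmax : ∀ j, |⟪s j, y - xi⟫| ≤ |⟪s k, y - xi⟫|)
    (xi' : H) (hxi' : xi' ∈ Submodule.span ℝ (insert (s k) (s '' ↑prev)))
    (hxi'orth : ∀ w ∈ Submodule.span ℝ (insert (s k) (s '' ↑prev)), ⟪y - xi', w⟫ = 0) :
    ‖y - xi'‖ ^ 2 ≤ (1 - (1 - μ) / (m : ℝ)) * ‖y - xi‖ ^ 2 :=
  stmt_10_general n m s hnorm μ hμ y T hT hyT prev hprevT xi hxi k hmax xi' hxi' hxi'orth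
end

section
/- Let H be a real Hilbert space, S ⊂ H a set of atoms all of norm c > 0, and y ∈ H with best-approximation residual r⋆ from lin(S). Suppose at each iteration i the selected atom z̃_i satisfies the approximation guarantee ⟨z̃_i, r_i⟩ ≥ δ_i ⟨z_i, r_i⟩ for some δ_i ∈ (0,1], where z_i = argmax_{z∈S} ⟨z, r_i⟩, and weights are fully re-optimized (residual = y minus orthogonal projection onto span of selected atoms). Then ‖r_{i+1} - r⋆‖² ≤ (1 - δ_i² ⟨z_i, r_i - r⋆⟩² / (‖z_i‖² ‖r_i - r⋆‖²)) · ‖r_i - r⋆‖². -/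
open RealInnerProductSpace

/-!
Write `r = y - xᵢ`, `r' = y - xᵢ'` and `r⋆ = y - x⋆`. Since `r⋆` is orthogonal to the closed span of
the atoms and `r - r⋆`, `r' - r⋆` lie in it, Pythagoras gives `‖r - r⋆‖² = ‖r‖² - ‖r⋆‖²` and likewise
for `r'`, so it suffices to bound the decrease of `‖r‖²`. Full re-optimisation does at least as well
as the line search along the new atom `z̃`, which removes `⟪z̃, r⟫² / ‖z̃‖²`; the inexact LMO
guarantee (together with maximality of `z` when `⟪z, r⟫ < 0`) bounds this below by
`δ² ⟪z, r⟫² / ‖z‖²`, and `⟪z, r⟫ = ⟪z, r - r⋆⟫`.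
-/

section

variable {H : Type*} [NormedAddCommGroup H] [InnerProductSpace ℝ H]

theorem inner_eq_zero_of_mem_closure_span {S : Set H} {v : H} (h : ∀ s ∈ S, ⟪v, s⟫ = 0)
    {w : H} (hw : w ∈ closure (Submodule.span ℝ S : Set H)) : ⟪v, w⟫ = 0 := by
  have hS : Submodule.span ℝ S ≤ (ℝ ∙ v)ᗮ :=
    Submodule.span_le.2 fun s hs => Submodule.mem_orthogonal_singleton_iff_inner_right.2 (h s hs)
  exact Submodule.mem_orthogonal_singleton_iff_inner_right.1
    (closure_minimal hS (Submodule.isClosed_orthogonal (ℝ ∙ v)) hw)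

theorem norm_sub_sq_eq_of_inner_sub_eq_zero {v w : H} (h : ⟪w, v - w⟫ = 0) :
    ‖v - w‖ ^ 2 = ‖v‖ ^ 2 - ‖w‖ ^ 2 := by
  have := norm_add_sq_eq_norm_sq_add_norm_sq_real h
  rw [add_sub_cancel] at this
  linear_combination -this

theorem norm_sq_le_of_forall_inner_eq_zero {K : Submodule ℝ H} {y x' x : H} (hx' : x' ∈ K)
    (horth : ∀ w ∈ K, ⟪y - x', w⟫ = 0) (hx : x ∈ K) : ‖y - x'‖ ^ 2 ≤ ‖y - x‖ ^ 2 := by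
  have hsplit : y - x = (y - x') + (x' - x) := by abel
  have := norm_add_sq_eq_norm_sq_add_norm_sq_real (horth _ (K.sub_mem hx' hx))
  rw [hsplit]
  nlinarith [mul_self_nonneg ‖x' - x‖]

/-- Exact line search along `z`; it also holds for `z = 0`, where `x / 0 = 0` makes both sides
`‖r‖²`. -/
theorem norm_sub_inner_div_smul_sq (r z : H) :
    ‖r - (⟪z, r⟫ / ‖z‖ ^ 2) • z‖ ^ 2 = ‖r‖ ^ 2 - ⟪z, r⟫ ^ 2 / ‖z‖ ^ 2 := by
  rcases eq_or_ne z 0 with rfl | hz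
  · simp
  · rw [norm_sub_sq_real, inner_smul_right, norm_smul, mul_pow, Real.norm_eq_abs, sq_abs,
      real_inner_comm]
    field_simp
    ring

theorem norm_sq_le_sub_inner_sq_div_of_forall_inner_eq_zero {K : Submodule ℝ H} {y x x' z : H}
    (hx : x ∈ K) (hz : z ∈ K) (hx' : x' ∈ K) (horth : ∀ w ∈ K, ⟪y - x', w⟫ = 0) :
    ‖y - x'‖ ^ 2 ≤ ‖y - x‖ ^ 2 - ⟪z, y - x⟫ ^ 2 / ‖z‖ ^ 2 := by
  have hline : x + (⟪z, y - x⟫ / ‖z‖ ^ 2) • z ∈ K := K.add_mem hx (K.smul_mem _ hz)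
  calc ‖y - x'‖ ^ 2 ≤ ‖y - (x + (⟪z, y - x⟫ / ‖z‖ ^ 2) • z)‖ ^ 2 :=
        norm_sq_le_of_forall_inner_eq_zero hx' horth hline
    _ = ‖y - x‖ ^ 2 - ⟪z, y - x⟫ ^ 2 / ‖z‖ ^ 2 := by
        rw [← sub_sub, norm_sub_inner_div_smul_sq]

end

theorem sq_mul_sq_le_sq_of_mul_le_of_le {δ a b : ℝ} (hδ0 : 0 ≤ δ) (hδ1 : δ ≤ 1)
    (hmul : δ * a ≤ b) (hle : b ≤ a) : δ ^ 2 * a ^ 2 ≤ b ^ 2 := by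
  rcases le_or_gt 0 a with ha | ha
  · nlinarith [mul_nonneg hδ0 ha]
  · nlinarith [mul_nonneg hδ0 (sub_nonneg.2 hδ1)]

/-- Also for `V = 0`, where the junk value `A / (B * 0) = 0` makes the right side `0`. -/
theorem le_one_sub_div_mul_mul_of_le_sub_div {x A B V : ℝ} (hA : 0 ≤ A) (hB : 0 ≤ B)
    (h : x ≤ V - A / B) : x ≤ (1 - A / (B * V)) * V := by
  rcases eq_or_ne V 0 with rfl | hV
  · have : 0 ≤ A / B := div_nonneg hA hB
    simp only [mul_zero]
    linarith
  · rwa [sub_mul, one_mul, mul_comm B, ← div_div, div_right_comm, div_mul_cancel₀ _ hV]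

theorem stmt_11_general {H : Type*} [NormedAddCommGroup H] [InnerProductSpace ℝ H]
    (S : Set H) (c : ℝ) (hSnorm : ∀ s ∈ S, ‖s‖ = c)
    (y xstar : H)
    (hxstar : xstar ∈ closure ((Submodule.span ℝ S : Submodule ℝ H) : Set H))
    (horth : ∀ s ∈ S, ⟪y - xstar, s⟫ = 0)
    (prev : Finset H) (hprev : ↑prev ⊆ S)
    (xi : H) (hxi : xi ∈ Submodule.span ℝ (prev : Set H))
    (zi : H) (hzi : zi ∈ S)
    (hmax : ∀ z ∈ S, ⟪z, y - xi⟫ ≤ ⟪zi, y - xi⟫)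
    (δ : ℝ) (hδ0 : 0 < δ) (hδ1 : δ ≤ 1)
    (zt : H) (hzt : zt ∈ S)
    (happrox : δ * ⟪zi, y - xi⟫ ≤ ⟪zt, y - xi⟫)
    (xi' : H) (hxi' : xi' ∈ Submodule.span ℝ (insert zt (prev : Set H)))
    (hxi'orth : ∀ w ∈ Submodule.span ℝ (insert zt (prev : Set H)), ⟪y - xi', w⟫ = 0) :
    ‖(y - xi') - (y - xstar)‖ ^ 2 ≤
      (1 - δ ^ 2 * ⟪zi, (y - xi) - (y - xstar)⟫ ^ 2 /
          (‖zi‖ ^ 2 * ‖(y - xi) - (y - xstar)‖ ^ 2)) * ‖(y - xi) - (y - xstar)‖ ^ 2 := by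
  set T := (Submodule.span ℝ S).topologicalClosure
  have hspan : Submodule.span ℝ (insert zt (prev : Set H)) ≤ Submodule.span ℝ S :=
    Submodule.span_mono (Set.insert_subset hzt hprev)
  have hxiT : xi ∈ T := (Submodule.span ℝ S).le_topologicalClosure (Submodule.span_mono hprev hxi)
  have hxi'T : xi' ∈ T := (Submodule.span ℝ S).le_topologicalClosure (hspan hxi')
  have hpyth : ∀ x ∈ T, ‖(y - x) - (y - xstar)‖ ^ 2 = ‖y - x‖ ^ 2 - ‖y - xstar‖ ^ 2 :=
    fun x hx => norm_sub_sq_eq_of_inner_sub_eq_zero <| by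
      rw [sub_sub_sub_cancel_left]
      exact inner_eq_zero_of_mem_closure_span horth (T.sub_mem hxstar hx)
  have hstep : ‖y - xi'‖ ^ 2 ≤ ‖y - xi‖ ^ 2 - ⟪zt, y - xi⟫ ^ 2 / ‖zt‖ ^ 2 :=
    norm_sq_le_sub_inner_sq_div_of_forall_inner_eq_zero
      (Submodule.span_mono (Set.subset_insert _ _) hxi)
      (Submodule.subset_span (Set.mem_insert _ _)) hxi' hxi'orth
  have hgain : δ ^ 2 * ⟪zi, y - xi⟫ ^ 2 / ‖zt‖ ^ 2 ≤ ⟪zt, y - xi⟫ ^ 2 / ‖zt‖ ^ 2 := by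
    gcongr
    exact sq_mul_sq_le_sq_of_mul_le_of_le hδ0.le hδ1 happrox (hmax zt hzt)
  have hzi_star : ⟪zi, (y - xi) - (y - xstar)⟫ = ⟪zi, y - xi⟫ := by
    rw [inner_sub_right, real_inner_comm (y - xstar) zi, horth zi hzi, sub_zero]
  rw [hzi_star]
  refine le_one_sub_div_mul_mul_of_le_sub_div (by positivity) (by positivity) ?_
  rw [hpyth xi' hxi'T, hpyth xi hxiT, hSnorm zi hzi, ← hSnorm zt hzt]
  linarith

/-- Linear convergence of generalized pursuit with an inexact LMO:
if the selected atom `zt` satisfies `⟪zt, r_i⟫ ≥ δ_i ⟪z_i, r_i⟫` where `z_i` is the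
exact maximizer, all atoms having norm `c > 0`, then
`‖r_{i+1} - r⋆‖² ≤ (1 - δ_i² ⟪z_i, r_i - r⋆⟫²/(‖z_i‖² ‖r_i - r⋆‖²)) ‖r_i - r⋆‖²`. -/
theorem stmt_11 {H : Type*} [NormedAddCommGroup H] [InnerProductSpace ℝ H] [CompleteSpace H]
    (S : Set H) (c : ℝ) (hc : 0 < c) (hSnorm : ∀ s ∈ S, ‖s‖ = c)
    (y xstar : H)
    (hxstar : xstar ∈ closure ((Submodule.span ℝ S : Submodule ℝ H) : Set H))
    (hmin : ∀ x ∈ closure ((Submodule.span ℝ S : Submodule ℝ H) : Set H),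
      ‖y - xstar‖ ≤ ‖y - x‖)
    (horth : ∀ s ∈ S, ⟪y - xstar, s⟫ = 0)
    (prev : Finset H) (hprev : ↑prev ⊆ S)
    (xi : H) (hxi : xi ∈ Submodule.span ℝ (prev : Set H))
    (hxiorth : ∀ w ∈ Submodule.span ℝ (prev : Set H), ⟪y - xi, w⟫ = 0)
    (zi : H) (hzi : zi ∈ S)
    (hmax : ∀ z ∈ S, ⟪z, y - xi⟫ ≤ ⟪zi, y - xi⟫)
    (δ : ℝ) (hδ0 : 0 < δ) (hδ1 : δ ≤ 1)
    (zt : H) (hzt : zt ∈ S)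
    (happrox : δ * ⟪zi, y - xi⟫ ≤ ⟪zt, y - xi⟫)
    (xi' : H) (hxi' : xi' ∈ Submodule.span ℝ (insert zt (prev : Set H)))
    (hxi'orth : ∀ w ∈ Submodule.span ℝ (insert zt (prev : Set H)), ⟪y - xi', w⟫ = 0) :
    ‖(y - xi') - (y - xstar)‖ ^ 2 ≤
      (1 - δ ^ 2 * ⟪zi, (y - xi) - (y - xstar)⟫ ^ 2 /
          (‖zi‖ ^ 2 * ‖(y - xi) - (y - xstar)‖ ^ 2)) * ‖(y - xi) - (y - xstar)‖ ^ 2 :=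
  stmt_11_general S c hSnorm y xstar hxstar horth prev hprev xi hxi zi hzi hmax δ hδ0 hδ1 zt hzt
    happrox xi' hxi' hxi'orth
end
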